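/- (Implicit characterization used in Claim of Lemma on moving spaces.) Let P, v, w be as follows: P invertible on a d-dimensional space, v, w unit vectors with ‖Pv‖ ≤ s_i(P) and ‖Pw‖ ≥ s_{i+1}(P). Write P = A_{m-1}···A_0 as a product of m invertible maps each with ‖A_j^{±1}‖ ≤ C. If for every ℓ with 0 ≤ ℓ ≤ m−k the ratio (‖A^{k+ℓ}w‖/‖A^ℓw‖)/(‖A^{k+ℓ}v‖/‖A^ℓv‖) ≤ 1/2 (where A^j denotes the partial product A_{j-1}···A_0), then s_{i+1}(P)/s_i(P) ≤ (1/2)^{⌊m/k⌋} C^{2k}. -/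

import Mathlib

open scoped BigOperators

/-- The singular values of a real matrix, in decreasing order:
`sValSorted A 0` is the largest singular value. -/
noncomputable def sValSorted {d : ℕ} (A : Matrix (Fin d) (Fin d) ℝ) : Fin d → ℝ :=
  fun i =>
    Real.sqrt
      (((Matrix.isHermitian_conjTranspose_mul_self A).eigenvalues ∘
        Tuple.sort (Matrix.isHermitian_conjTranspose_mul_self A).eigenvalues) i.rev)

/-- `lamA A i = λ_i(A) = log s_i(A)` (1-indexed, `1 ≤ i ≤ d`). -/
noncomputable def lamA {d : ℕ} (A : Matrix (Fin d) (Fin d) ℝ) (i : ℕ) : ℝ :=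
  if h : 1 ≤ i ∧ i ≤ d then Real.log (sValSorted A ⟨i - 1, by omega⟩) else 0

/-- `sigmaA A i = σ_i(A) = λ_1(A) + ⋯ + λ_i(A)`, with `σ_0 = 0`. -/
noncomputable def sigmaA {d : ℕ} (A : Matrix (Fin d) (Fin d) ℝ) (i : ℕ) : ℝ :=
  ∑ j ∈ Finset.Icc 1 i, lamA A j

/-- `zetaA A = ζ(A) = σ_1 + ⋯ + σ_{d-1} - ((d-1)/2) σ_d`. -/
noncomputable def zetaA {d : ℕ} (A : Matrix (Fin d) (Fin d) ℝ) : ℝ :=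
  (∑ i ∈ Finset.Ico 1 d, sigmaA A i) - ((d - 1 : ℝ) / 2) * sigmaA A d

/-- `gammaA A i = γ_i(A) = (λ_i(A) - λ_{i+1}(A))/2`. -/
noncomputable def gammaA {d : ℕ} (A : Matrix (Fin d) (Fin d) ℝ) (i : ℕ) : ℝ :=
  (lamA A i - lamA A (i + 1)) / 2

/-- The partial products `A^j := A_{j-1} ⋯ A_0`, with `A^0 = id`. -/
noncomputable def pProd {d : ℕ} (A : ℕ → Matrix (Fin d) (Fin d) ℝ) : ℕ → Matrix (Fin d) (Fin d) ℝ
  | 0 => 1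
  | (j + 1) => A j * pProd A j

/-! The ratio `‖A^ℓ w‖ / ‖A^ℓ v‖` drops by a factor `2` across each of the `⌊m/k⌋` consecutive
windows `[qk, (q+1)k]`, and over the remaining fewer than `k` steps it grows by at most `C²` per
step, since `‖A^ℓ w‖` grows and `‖A^ℓ v‖` shrinks by at most a factor `C`. Finally
`s_j(P) / s_i(P) ≤ ‖Pw‖ / ‖Pv‖`. -/

section GrowthBounds

variable {u : ℕ → ℝ} {C : ℝ}

theorem le_pow_mul_of_forall_succ_le (hC : 0 ≤ C) (n t : ℕ)
    (h : ∀ i < t, u (n + i + 1) ≤ C * u (n + i)) : u (n + t) ≤ C ^ t * u n :=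
  le_geom (u := fun i => u (n + i)) hC t h

theorem le_pow_mul_of_forall_le_succ (hC : 0 ≤ C) (n t : ℕ)
    (h : ∀ i < t, u (n + i) ≤ C * u (n + i + 1)) : u n ≤ C ^ t * u (n + t) := by
  induction t with
  | zero => simp
  | succ t ih =>
    calc u n ≤ C ^ t * u (n + t) := ih fun i hi => h i (by omega)
      _ ≤ C ^ t * (C * u (n + t + 1)) := by gcongr; exact h t (by omega)
      _ = C ^ (t + 1) * u (n + (t + 1)) := by ring_nf

theorem pos_of_forall_le_mul_succ (hC : 0 ≤ C) {m : ℕ} (h0 : 0 < u 0)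
    (h : ∀ n < m, u n ≤ C * u (n + 1)) {ℓ : ℕ} (hℓ : ℓ ≤ m) : 0 < u ℓ := by
  have key := le_pow_mul_of_forall_le_succ hC 0 ℓ fun i hi => by
    simpa only [zero_add] using h i (by omega)
  rw [zero_add] at key
  exact pos_of_mul_pos_right (h0.trans_le key) (pow_nonneg hC ℓ)

end GrowthBounds

section RatioBounds

variable {a b : ℕ → ℝ} {C : ℝ} {m : ℕ}

theorem div_le_pow_mul_div (hC : 0 ≤ C) (hb : ∀ ℓ ≤ m, 0 < b ℓ)
    (ha_succ : ∀ n < m, a (n + 1) ≤ C * a n) (hb_succ : ∀ n < m, b n ≤ C * b (n + 1))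
    {n t : ℕ} (hnt : n + t ≤ m) (ha : 0 ≤ a n) :
    a (n + t) / b (n + t) ≤ C ^ (2 * t) * (a n / b n) := by
  have hb_n := hb n (by omega)
  have hb_nt := hb (n + t) hnt
  have hnum : a (n + t) ≤ C ^ t * a n :=
    le_pow_mul_of_forall_succ_le hC n t fun i hi => ha_succ (n + i) (by omega)
  have hden : 1 / b (n + t) ≤ C ^ t / b n := by
    rw [div_le_div_iff₀ hb_nt hb_n, one_mul]
    exact le_pow_mul_of_forall_le_succ hC n t fun i hi => hb_succ (n + i) (by omega)
  calc a (n + t) / b (n + t) ≤ C ^ t * a n * (1 / b (n + t)) := by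
        rw [mul_one_div]; gcongr
    _ ≤ C ^ t * a n * (C ^ t / b n) := by gcongr
    _ = C ^ (2 * t) * (a n / b n) := by ring

theorem div_le_half_pow_mul_div_of_windows {k : ℕ} (ha : ∀ ℓ ≤ m, 0 < a ℓ)
    (hb : ∀ ℓ ≤ m, 0 < b ℓ)
    (hwin : ∀ ℓ ≤ m - k, (a (k + ℓ) / a ℓ) / (b (k + ℓ) / b ℓ) ≤ 1 / 2)
    {q : ℕ} (hq : q * k ≤ m) :
    a (q * k) / b (q * k) ≤ (1 / 2) ^ q * (a 0 / b 0) := by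
  suffices h : ∀ p < q, a ((p + 1) * k) / b ((p + 1) * k) ≤ 1 / 2 * (a (p * k) / b (p * k)) by
    simpa only [zero_mul] using le_geom (u := fun p => a (p * k) / b (p * k)) (by norm_num) q h
  intro p hp
  have hpk : p * k + k ≤ m := by
    simpa only [Nat.succ_mul] using (Nat.mul_le_mul_right k (Nat.succ_le_of_lt hp)).trans hq
  have hwin_p := hwin (p * k) (by omega)
  rw [div_div_div_comm, div_le_iff₀ (div_pos (ha _ (by omega)) (hb _ (by omega))),
    add_comm] at hwin_p
  simpa only [Nat.succ_mul] using hwin_p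

theorem div_le_half_pow_mul_of_windows {k : ℕ} (hk : 0 < k) (hC : 1 ≤ C)
    (ha : ∀ ℓ ≤ m, 0 < a ℓ) (hb : ∀ ℓ ≤ m, 0 < b ℓ)
    (ha_succ : ∀ n < m, a (n + 1) ≤ C * a n) (hb_succ : ∀ n < m, b n ≤ C * b (n + 1))
    (hwin : ∀ ℓ ≤ m - k, (a (k + ℓ) / a ℓ) / (b (k + ℓ) / b ℓ) ≤ 1 / 2) :
    a m / b m ≤ (1 / 2) ^ (m / k) * C ^ (2 * k) * (a 0 / b 0) := by
  have hm : m / k * k + m % k = m := Nat.div_add_mod' m k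
  calc a m / b m = a (m / k * k + m % k) / b (m / k * k + m % k) := by rw [hm]
    _ ≤ C ^ (2 * (m % k)) * (a (m / k * k) / b (m / k * k)) :=
      div_le_pow_mul_div (by linarith) hb ha_succ hb_succ hm.le (ha _ (by omega)).le
    _ ≤ C ^ (2 * k) * ((1 / 2) ^ (m / k) * (a 0 / b 0)) := by
      have hmod : 2 * (m % k) ≤ 2 * k := by have := Nat.mod_lt m hk; omega
      exact mul_le_mul (pow_le_pow_right₀ hC hmod)
        (div_le_half_pow_mul_div_of_windows ha hb hwin (by omega))
        (div_pos (ha _ (by omega)) (hb _ (by omega))).le (by positivity)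
    _ = (1 / 2) ^ (m / k) * C ^ (2 * k) * (a 0 / b 0) := by ring

end RatioBounds

section EuclideanNorms

open Matrix

variable {𝕜 n : Type*} [RCLike 𝕜] [Fintype n] [DecidableEq n]

theorem norm_toEuclideanCLM_mul_apply_le (M N : Matrix n n 𝕜) (x : EuclideanSpace 𝕜 n) :
    ‖toEuclideanCLM (𝕜 := 𝕜) (M * N) x‖ ≤
      ‖toEuclideanCLM (𝕜 := 𝕜) M‖ * ‖toEuclideanCLM (𝕜 := 𝕜) N x‖ := by
  rw [map_mul]
  exact (toEuclideanCLM (𝕜 := 𝕜) M).le_opNorm _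

theorem norm_toEuclideanCLM_apply_le_inv_mul {M : Matrix n n 𝕜} (hM : IsUnit M)
    (N : Matrix n n 𝕜) (x : EuclideanSpace 𝕜 n) :
    ‖toEuclideanCLM (𝕜 := 𝕜) N x‖ ≤
      ‖toEuclideanCLM (𝕜 := 𝕜) M⁻¹‖ * ‖toEuclideanCLM (𝕜 := 𝕜) (M * N) x‖ := by
  simpa only [← Matrix.mul_assoc, Matrix.nonsing_inv_mul _ ((isUnit_iff_isUnit_det M).mp hM),
    Matrix.one_mul] using norm_toEuclideanCLM_mul_apply_le M⁻¹ (M * N) x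

theorem one_le_of_norm_toEuclideanCLM_le [Nonempty n] {M : Matrix n n 𝕜} (hM : IsUnit M)
    {C : ℝ} (h : ‖toEuclideanCLM (𝕜 := 𝕜) M‖ ≤ C) (h_inv : ‖toEuclideanCLM (𝕜 := 𝕜) M⁻¹‖ ≤ C) :
    1 ≤ C := by
  have hC : 0 ≤ C := (norm_nonneg _).trans h
  have h1 : (1 : ℝ) ≤ C * C :=
    calc (1 : ℝ) = ‖toEuclideanCLM (𝕜 := 𝕜) (M * M⁻¹)‖ := by
          rw [Matrix.mul_nonsing_inv _ ((isUnit_iff_isUnit_det M).mp hM), map_one, norm_one]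
      _ ≤ ‖toEuclideanCLM (𝕜 := 𝕜) M‖ * ‖toEuclideanCLM (𝕜 := 𝕜) M⁻¹‖ := by
          rw [map_mul]; exact norm_mul_le _ _
      _ ≤ C * C := by gcongr
  nlinarith

end EuclideanNorms

theorem singular_value_gap_of_no_exchange_general {d m k : ℕ} (hk : 0 < k) (hkm : k ≤ m) (C : ℝ)
    (A : ℕ → Matrix (Fin d) (Fin d) ℝ)
    (hinv : ∀ j < m, IsUnit (A j))
    (hnorm : ∀ j < m, ‖Matrix.toEuclideanCLM (𝕜 := ℝ) (A j)‖ ≤ C)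
    (hnorminv : ∀ j < m, ‖Matrix.toEuclideanCLM (𝕜 := ℝ) (A j)⁻¹‖ ≤ C)
    (v w : EuclideanSpace ℝ (Fin d)) (hv : ‖v‖ = 1) (hw : ‖w‖ = 1)
    (i j : Fin d)
    (hPv : ‖Matrix.toEuclideanCLM (𝕜 := ℝ) (pProd A m) v‖ ≤ sValSorted (pProd A m) i)
    (hPw : sValSorted (pProd A m) j ≤ ‖Matrix.toEuclideanCLM (𝕜 := ℝ) (pProd A m) w‖)
    (hratio : ∀ ℓ, ℓ ≤ m - k →
      (‖Matrix.toEuclideanCLM (𝕜 := ℝ) (pProd A (k + ℓ)) w‖ /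
          ‖Matrix.toEuclideanCLM (𝕜 := ℝ) (pProd A ℓ) w‖) /
        (‖Matrix.toEuclideanCLM (𝕜 := ℝ) (pProd A (k + ℓ)) v‖ /
          ‖Matrix.toEuclideanCLM (𝕜 := ℝ) (pProd A ℓ) v‖) ≤ 1 / 2) :
    sValSorted (pProd A m) j / sValSorted (pProd A m) i ≤
      (1 / 2 : ℝ) ^ (m / k) * C ^ (2 * k) := by
  have hm : 0 < m := hk.trans_le hkm
  have : Nonempty (Fin d) := ⟨i⟩
  have hC : 1 ≤ C := one_le_of_norm_toEuclideanCLM_le (hinv 0 hm) (hnorm 0 hm) (hnorminv 0 hm)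
  have hfwd : ∀ x, ∀ n < m, ‖Matrix.toEuclideanCLM (𝕜 := ℝ) (pProd A (n + 1)) x‖ ≤
      C * ‖Matrix.toEuclideanCLM (𝕜 := ℝ) (pProd A n) x‖ := fun x n hn =>
    (norm_toEuclideanCLM_mul_apply_le (A n) (pProd A n) x).trans
      (mul_le_mul_of_nonneg_right (hnorm n hn) (norm_nonneg _))
  have hbwd : ∀ x, ∀ n < m, ‖Matrix.toEuclideanCLM (𝕜 := ℝ) (pProd A n) x‖ ≤
      C * ‖Matrix.toEuclideanCLM (𝕜 := ℝ) (pProd A (n + 1)) x‖ := fun x n hn =>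
    (norm_toEuclideanCLM_apply_le_inv_mul (hinv n hn) (pProd A n) x).trans
      (mul_le_mul_of_nonneg_right (hnorminv n hn) (norm_nonneg _))
  have hpos : ∀ x : EuclideanSpace ℝ (Fin d), ‖x‖ = 1 →
      ∀ ℓ ≤ m, 0 < ‖Matrix.toEuclideanCLM (𝕜 := ℝ) (pProd A ℓ) x‖ := fun x hx _ hℓ =>
    pos_of_forall_le_mul_succ (by linarith) (by simp [pProd, hx]) (hbwd x) hℓ
  have hwv := div_le_half_pow_mul_of_windows hk hC (hpos w hw) (hpos v hv) (hfwd w) (hbwd v) hratio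
  simp only [pProd, map_one, one_apply_eq_self, hv, hw, div_one, mul_one] at hwv
  exact (div_le_div₀ (norm_nonneg _) hPw (hpos v hv m le_rfl) hPv).trans hwv

/-- if along every window of length `k` the expansion of `w` never beats half
the expansion of `v`, then the gap between the `i`-th and `(i+1)`-th singular values of the
full product `P = A_{m-1} ⋯ A_0` satisfies `s_{i+1}(P)/s_i(P) ≤ (1/2)^{⌊m/k⌋} C^{2k}`.
Here `i j : Fin d` with `(j:ℕ) = i + 1` encode consecutive (0-indexed) singular value indices,
so `sValSorted P i = s_i(P)` and `sValSorted P j = s_{i+1}(P)` in the paper's 1-indexed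
notation. -/
theorem singular_value_gap_of_no_exchange {d m k : ℕ} (hk : 0 < k) (hkm : k ≤ m) (C : ℝ)
    (A : ℕ → Matrix (Fin d) (Fin d) ℝ)
    (hinv : ∀ j < m, IsUnit (A j))
    (hnorm : ∀ j < m, ‖Matrix.toEuclideanCLM (𝕜 := ℝ) (A j)‖ ≤ C)
    (hnorminv : ∀ j < m, ‖Matrix.toEuclideanCLM (𝕜 := ℝ) (A j)⁻¹‖ ≤ C)
    (v w : EuclideanSpace ℝ (Fin d)) (hv : ‖v‖ = 1) (hw : ‖w‖ = 1)
    (i j : Fin d) (hij : (j : ℕ) = (i : ℕ) + 1)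
    (hPv : ‖Matrix.toEuclideanCLM (𝕜 := ℝ) (pProd A m) v‖ ≤ sValSorted (pProd A m) i)
    (hPw : sValSorted (pProd A m) j ≤ ‖Matrix.toEuclideanCLM (𝕜 := ℝ) (pProd A m) w‖)
    (hratio : ∀ ℓ, ℓ ≤ m - k →
      (‖Matrix.toEuclideanCLM (𝕜 := ℝ) (pProd A (k + ℓ)) w‖ /
          ‖Matrix.toEuclideanCLM (𝕜 := ℝ) (pProd A ℓ) w‖) /
        (‖Matrix.toEuclideanCLM (𝕜 := ℝ) (pProd A (k + ℓ)) v‖ /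
          ‖Matrix.toEuclideanCLM (𝕜 := ℝ) (pProd A ℓ) v‖) ≤ 1 / 2) :
    sValSorted (pProd A m) j / sValSorted (pProd A m) i ≤
      (1 / 2 : ℝ) ^ (m / k) * C ^ (2 * k) :=
  singular_value_gap_of_no_exchange_general hk hkm C A hinv hnorm hnorminv v w hv hw i j hPv hPw
    hratio
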